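/- (Point convergence.) Let P be a probability distribution on ℝ^d × ℝ^L supported on points z = (x, y) with ‖x‖₂ ≤ R, and such that 0 ≤ ⟨y, y'⟩ ≤ L̄ for any two points in the support. Fix a real symmetric positive semidefinite d×d matrix A*. Then for every n ≥ 2 and every δ ∈ (0,1), with probability at least 1 − δ over i.i.d. samples D = (z_1, …, z_n) from P, L̂(A*; D) − L(A*) ≤ 4(L̄² + ‖A*‖_F² R⁴) · √(log(1/δ)/(2n)). -/

import Mathlib

open MeasureTheory Finset
open scoped ENNReal

noncomputable section

/-- A labeled data point z = (x, y) ∈ ℝ^d × ℝ^L. -/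
abbrev Pt (d L : ℕ) := (Fin d → ℝ) × (Fin L → ℝ)

/-- Inner product ⟨y, y'⟩ of label vectors. -/
def ipY {L : ℕ} (y y' : Fin L → ℝ) : ℝ := ∑ i, y i * y' i

/-- Bilinear form xᵀ A x'. -/
def qForm {d : ℕ} (A : Matrix (Fin d) (Fin d) ℝ) (x x' : Fin d → ℝ) : ℝ :=
  ∑ i, ∑ j, x i * A i j * x' j

/-- Euclidean norm ‖x‖₂. -/
def norm2 {d : ℕ} (x : Fin d → ℝ) : ℝ := Real.sqrt (∑ i, x i ^ 2)

/-- Frobenius norm ‖A‖_F. -/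
def frobNorm {d : ℕ} (A : Matrix (Fin d) (Fin d) ℝ) : ℝ :=
  Real.sqrt (∑ i, ∑ j, (A i j) ^ 2)

/-- Loss ℓ(A; z, z') := g(⟨y, y'⟩)·(⟨y, y'⟩ − xᵀ A x')² + λ·Tr(A). -/
def lossFn {d L : ℕ} (g : ℝ → ℝ) (lam : ℝ) (A : Matrix (Fin d) (Fin d) ℝ)
    (z z' : Pt d L) : ℝ :=
  g (ipY z.2 z'.2) * (ipY z.2 z'.2 - qForm A z.1 z'.1) ^ 2 + lam * A.trace

/-- Empirical risk L̂(A; D) := (1/(n(n−1))) Σᵢ Σ_{j≠i} ℓ(A; zᵢ, zⱼ). -/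
def empRisk {d L : ℕ} (g : ℝ → ℝ) (lam : ℝ) {n : ℕ} (A : Matrix (Fin d) (Fin d) ℝ)
    (D : Fin n → Pt d L) : ℝ :=
  (1 / ((n : ℝ) * ((n : ℝ) - 1))) * ∑ i, ∑ j ∈ univ.erase i, lossFn g lam A (D i) (D j)

/-- Population risk L(A) := E_{z,z' i.i.d. ∼ P}[ℓ(A; z, z')]. -/
def popRisk {d L : ℕ} (g : ℝ → ℝ) (lam : ℝ) (P : Measure (Pt d L))
    (A : Matrix (Fin d) (Fin d) ℝ) : ℝ :=
  ∫ z, (∫ z', lossFn g lam A z z' ∂P) ∂P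

/-- Risk relative to the training set, L̃(A; D) := (1/n) Σₖ E_{z∼P}[ℓ(A; z, zₖ)]. -/
def tilRisk {d L : ℕ} (g : ℝ → ℝ) (lam : ℝ) (P : Measure (Pt d L)) {n : ℕ}
    (A : Matrix (Fin d) (Fin d) ℝ) (D : Fin n → Pt d L) : ℝ :=
  (1 / (n : ℝ)) * ∑ k, ∫ z, lossFn g lam A z (D k) ∂P

/-- Law of a Rademacher random variable: uniform on {−1, +1}. -/
def radMeasure : Measure ℝ :=
  (2⁻¹ : ℝ≥0∞) • Measure.dirac (-1) + (2⁻¹ : ℝ≥0∞) • Measure.dirac 1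



/-! On the full-measure set `S` every loss value lies in an interval of length
`B = (L̄ + ‖A*‖_F R²)²`, because `|xᵀ A x'| ≤ ‖A‖_F ‖x‖ ‖x'‖` by Cauchy–Schwarz. The empirical
risk is a U-statistic of order two with mean the population risk, and replacing one sample
point moves it by at most `2B/n`. McDiarmid's inequality (peel off one coordinate at a time and
apply Hoeffding's lemma to the conditional mean) makes it sub-Gaussian with variance proxy
`B²/n`, so with probability at least `1 - δ` it exceeds its mean by at most
`2B √(log(1/δ)/(2n))`, and `2B ≤ 4(L̄² + ‖A*‖_F² R⁴)`. -/

open Real ProbabilityTheory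
open scoped NNReal

namespace ProbabilityTheory

section SubGaussian

variable {Ω : Type*} [MeasurableSpace Ω] {μ : Measure Ω} [IsProbabilityMeasure μ]

lemma hasSubgaussianMGF_sub_integral_of_abs_sub_le {Y : Ω → ℝ} (hY : Measurable Y) {c : ℝ≥0}
    (hc : ∀ ω ω', |Y ω - Y ω'| ≤ c) :
    HasSubgaussianMGF (fun ω => Y ω - μ[Y]) ((c / 2) ^ 2) μ := by
  have : Nonempty Ω := nonempty_of_isProbabilityMeasure μ
  have hbdd : BddBelow (Set.range Y) := ⟨Y (Classical.arbitrary Ω) - c, by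
    rintro _ ⟨ω, rfl⟩; linarith [abs_le.1 (hc (Classical.arbitrary Ω) ω)]⟩
  have hmem : ∀ ω, Y ω ∈ Set.Icc (⨅ ω, Y ω) ((⨅ ω, Y ω) + c) := fun ω =>
    ⟨ciInf_le hbdd ω, by
      have : Y ω - c ≤ ⨅ ω, Y ω := le_ciInf fun ω' => by linarith [abs_le.1 (hc ω ω')]
      linarith⟩
  simpa using hasSubgaussianMGF_of_mem_Icc hY.aemeasurable (ae_of_all _ hmem)

lemma HasSubgaussianMGF.ofReal_one_sub_le_measure_le {Y : Ω → ℝ} {c : ℝ≥0}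
    (hY : HasSubgaussianMGF Y c μ) {δ : ℝ} (hδ : 0 < δ) :
    ENNReal.ofReal (1 - δ) ≤ μ {ω | Y ω ≤ √(2 * c * log (1 / δ))} := by
  set ε := √(2 * c * log (1 / δ))
  rcases le_or_gt 1 δ with hδ1 | hδ1
  · simp [ENNReal.ofReal_eq_zero.2 (sub_nonpos.2 hδ1)]
  rcases eq_zero_or_pos c with rfl | hc
  · have hae : ∀ᵐ ω ∂μ, Y ω ≤ ε := by
      filter_upwards [hY.ae_eq_zero_of_hasSubgaussianMGF_zero] with ω hω
      simp [hω, ε]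
    calc ENNReal.ofReal (1 - δ) ≤ μ Set.univ := by simp [hδ.le]
      _ ≤ _ := measure_mono_ae (hae.mono fun ω hω _ => hω)
  have hlog : 0 < log (1 / δ) := log_pos (by rw [lt_one_div one_pos hδ]; simpa)
  have htail : μ {ω | ε ≤ Y ω} ≤ ENNReal.ofReal δ := by
    rw [← ofReal_measureReal]
    refine ENNReal.ofReal_le_ofReal ((hY.measure_ge_le (sqrt_nonneg _)).trans_eq ?_)
    rw [sq_sqrt (by positivity), show -(2 * c * log (1 / δ)) / (2 * c) = -log (1 / δ) by
      field_simp, exp_neg, exp_log (by positivity), one_div, inv_inv]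
  have hcover : Set.univ ⊆ {ω | Y ω ≤ ε} ∪ {ω | ε ≤ Y ω} := fun ω _ => le_total (Y ω) ε
  rw [ENNReal.ofReal_sub _ hδ.le, ENNReal.ofReal_one, tsub_le_iff_right]
  calc 1 = μ Set.univ := measure_univ.symm
    _ ≤ μ {ω | Y ω ≤ ε} + μ {ω | ε ≤ Y ω} := (measure_mono hcover).trans (measure_union_le _ _)
    _ ≤ _ := by gcongr

lemma hasSubgaussianMGF_prod {β : Type*} [MeasurableSpace β] {ν : Measure β}
    [IsProbabilityMeasure ν] {F : Ω × β → ℝ} {G : Ω → ℝ} {c₁ c₂ : ℝ≥0} (hF : Measurable F)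
    (hG : HasSubgaussianMGF G c₁ μ) (hFG : ∀ x, HasSubgaussianMGF (fun y => F (x, y) - G x) c₂ ν) :
    HasSubgaussianMGF F (c₁ + c₂) (μ.prod ν) := by
  have hsection : ∀ t x, ∫ y, exp (t * F (x, y)) ∂ν
      = exp (t * G x) * mgf (fun y => F (x, y) - G x) ν t := fun t x => by
    rw [mgf, ← integral_const_mul]
    congr with y
    rw [← exp_add]
    ring_nf
  have hsection_le : ∀ t x, ∫ y, exp (t * F (x, y)) ∂ν ≤ exp (t * G x) * exp (c₂ * t ^ 2 / 2) :=
    fun t x => (hsection t x).trans_le (by gcongr; exact (hFG x).mgf_le t)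
  have hint : ∀ t, Integrable (fun p => exp (t * F p)) (μ.prod ν) := fun t => by
    have hm : Measurable fun p => exp (t * F p) := by fun_prop
    refine (integrable_prod_iff hm.aestronglyMeasurable).2 ⟨ae_of_all _ fun x => ?_, ?_⟩
    · convert ((hFG x).integrable_exp_mul t).const_mul (exp (t * G x)) using 2 with y
      rw [← exp_add]
      ring_nf
    · refine ((hG.integrable_exp_mul t).mul_const (exp (c₂ * t ^ 2 / 2))).mono'
        hm.norm.stronglyMeasurable.integral_prod_right'.aestronglyMeasurable
        (ae_of_all _ fun x => ?_)
      simpa [norm_of_nonneg (integral_nonneg fun _ => (exp_pos _).le)] using hsection_le t x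
  refine ⟨hint, fun t => ?_⟩
  calc mgf F (μ.prod ν) t = ∫ x, ∫ y, exp (t * F (x, y)) ∂ν ∂μ := integral_prod _ (hint t)
    _ ≤ ∫ x, exp (t * G x) * exp (c₂ * t ^ 2 / 2) ∂μ :=
      integral_mono (hint t).integral_prod_left
        ((hG.integrable_exp_mul t).mul_const _) (hsection_le t)
    _ = mgf G μ t * exp (c₂ * t ^ 2 / 2) := integral_mul_const _ _
    _ ≤ exp (c₁ * t ^ 2 / 2) * exp (c₂ * t ^ 2 / 2) := by gcongr; exact hG.mgf_le t
    _ = exp (↑(c₁ + c₂) * t ^ 2 / 2) := by rw [← exp_add]; push_cast; ring_nf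

end SubGaussian

section McDiarmid

lemma consEquiv_const_apply {X : Type*} {n : ℕ} (q : X × (Fin n → X)) :
    (Fin.consEquiv fun _ : Fin (n + 1) => X) q = Fin.cons q.1 q.2 :=
  rfl

def BoundedDifferences {X ι : Type*} [DecidableEq ι] (f : (ι → X) → ℝ) (c : ℝ) : Prop :=
  ∀ D i x, |f (Function.update D i x) - f D| ≤ c

variable {X : Type*} [MeasurableSpace X] {P : Measure X} [IsProbabilityMeasure P]

lemma integral_pi_succ {n : ℕ} (f : (Fin (n + 1) → X) → ℝ) :
    ∫ D, f D ∂Measure.pi (fun _ => P) =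
      ∫ q, f (Fin.cons q.1 q.2) ∂P.prod (Measure.pi fun _ : Fin n => P) := by
  rw [← (measurePreserving_piFinSuccAbove (fun _ => P) 0).integral_comp']
  simp

lemma HasSubgaussianMGF.of_pi_succ {n : ℕ} {Y : (Fin (n + 1) → X) → ℝ} {c : ℝ≥0}
    (hY : HasSubgaussianMGF (fun q => Y (Fin.cons q.1 q.2)) c
      (P.prod (Measure.pi fun _ : Fin n => P))) :
    HasSubgaussianMGF Y c (Measure.pi fun _ => P) := by
  have hpres := measurePreserving_piFinSuccAbove (fun _ : Fin (n + 1) => P) 0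
  rw [← hpres.map_eq] at hY
  convert hY.of_map hpres.measurable.aemeasurable
  funext D
  simp

theorem hasSubgaussianMGF_pi_of_boundedDifferences {n : ℕ} {f : (Fin n → X) → ℝ} {a b : ℝ}
    {c : ℝ≥0} (hf : Measurable f) (hf_mem : ∀ D, f D ∈ Set.Icc a b)
    (hf_diff : BoundedDifferences f c) :
    HasSubgaussianMGF (fun D => f D - ∫ D', f D' ∂Measure.pi fun _ => P) (n * (c / 2) ^ 2)
      (Measure.pi fun _ => P) := by
  induction n with
  | zero =>
    have hconst : (fun D => f D - ∫ D', f D' ∂Measure.pi fun _ => P) = fun _ => 0 := by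
      funext D; simp [Subsingleton.elim _ D]
    simp [hconst]
  | succ n ih =>
    set πn := Measure.pi fun _ : Fin n => P
    set F : X × (Fin n → X) → ℝ := fun q => f (Fin.cons q.1 q.2)
    have hFm : Measurable F := by
      simpa [F, Function.comp_def, consEquiv_const_apply] using
        hf.comp (MeasurableEquiv.piFinSuccAbove (fun _ : Fin (n + 1) => X) 0).symm.measurable
    have hsect_int : ∀ x, Integrable (fun w => F (x, w)) πn := fun x =>
      .of_mem_Icc a b (hFm.comp measurable_prodMk_left).aemeasurable
        (ae_of_all _ fun w => hf_mem _)
    set g : X → ℝ := fun x => ∫ w, F (x, w) ∂πn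
    have hg_osc : ∀ x x', |g x - g x'| ≤ c := fun x x' => by
      rw [← integral_sub (hsect_int x) (hsect_int x'), ← Real.norm_eq_abs]
      refine (norm_integral_le_of_norm_le_const (C := c) (ae_of_all _ fun w => ?_)).trans_eq
        (by simp)
      simpa [F, Fin.update_cons_zero] using hf_diff (Fin.cons x' w) 0 x
    have hmean : ∫ D, f D ∂Measure.pi (fun _ => P) = ∫ x, g x ∂P := by
      rw [integral_pi_succ, integral_prod F
        (.of_mem_Icc a b hFm.aemeasurable (ae_of_all _ fun q => hf_mem _))]
    have hsect : ∀ x, HasSubgaussianMGF (fun w => F (x, w) - g x) (n * (c / 2) ^ 2) πn :=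
      fun x => ih (hFm.comp measurable_prodMk_left) (fun w => hf_mem _) fun w i y => by
        simpa [F, Fin.cons_update] using hf_diff (Fin.cons x w) i.succ y
    have hprod := hasSubgaussianMGF_prod (G := fun x => g x - ∫ x, g x ∂P)
      (hFm.sub_const (∫ x, g x ∂P))
      (hasSubgaussianMGF_sub_integral_of_abs_sub_le
        hFm.stronglyMeasurable.integral_prod_right'.measurable hg_osc)
      (fun x => by simpa using hsect x)
    refine HasSubgaussianMGF.of_pi_succ ?_
    convert hprod using 1
    · simp [F, hmean]
    · push_cast
      ring

end McDiarmid

end ProbabilityTheory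

section UStatistic

variable {α : Type*}

def uStatistic (h : α → α → ℝ) {n : ℕ} (D : Fin n → α) : ℝ :=
  (1 / ((n : ℝ) * ((n : ℝ) - 1))) * ∑ i, ∑ j ∈ univ.erase i, h (D i) (D j)

variable {h : α → α → ℝ} {n : ℕ}

lemma uStatistic_const (hn : 2 ≤ n) (a : ℝ) (D : Fin n → α) :
    uStatistic (fun _ _ => a) D = a := by
  have : (n : ℝ) - 1 ≠ 0 := by
    have : (2 : ℝ) ≤ n := by exact_mod_cast hn
    linarith
  simp [uStatistic, Finset.card_erase_of_mem, Nat.cast_sub (by omega : 1 ≤ n)]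
  field_simp

lemma uStatistic_mono (hn : 2 ≤ n) {h' : α → α → ℝ} (hle : ∀ z z', h z z' ≤ h' z z')
    (D : Fin n → α) : uStatistic h D ≤ uStatistic h' D := by
  have : (2 : ℝ) ≤ n := by exact_mod_cast hn
  unfold uStatistic
  gcongr with i _ j _
  · exact one_div_nonneg.2 (by nlinarith)
  · exact hle _ _

lemma uStatistic_mem_Icc (hn : 2 ≤ n) {a b : ℝ} (hh : ∀ z z', h z z' ∈ Set.Icc a b)
    (D : Fin n → α) : uStatistic h D ∈ Set.Icc a b :=
  ⟨(uStatistic_const hn a D).symm.trans_le (uStatistic_mono hn (fun z z' => (hh z z').1) D),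
    (uStatistic_mono hn (fun z z' => (hh z z').2) D).trans_eq (uStatistic_const hn b D)⟩

lemma abs_uStatistic_update_sub_le (hn : 2 ≤ n) {a b : ℝ} (hh : ∀ z z', h z z' ∈ Set.Icc a b)
    (D : Fin n → α) (k : Fin n) (x : α) :
    |uStatistic h (Function.update D k x) - uStatistic h D| ≤ 2 * (b - a) / n := by
  set D' := Function.update D k x
  have hn' : (2 : ℝ) ≤ n := by exact_mod_cast hn
  -- only the `2 (n - 1)` ordered pairs that involve `k` can change
  let count : Fin n → Fin n → ℝ := fun i j => (if i = k then 1 else 0) + (if j = k then 1 else 0)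
  have hterm : ∀ i j, |h (D' i) (D' j) - h (D i) (D j)| ≤ (b - a) * count i j := fun i j => by
    have hosc : |h (D' i) (D' j) - h (D i) (D j)| ≤ b - a := by
      obtain ⟨h₁, h₂⟩ := hh (D' i) (D' j)
      obtain ⟨h₃, h₄⟩ := hh (D i) (D j)
      exact abs_sub_le_iff.2 ⟨by linarith, by linarith⟩
    have hba : 0 ≤ b - a := (abs_nonneg _).trans hosc
    by_cases hi : i = k <;> by_cases hj : j = k
    · simp only [count, if_pos hi, if_pos hj]; linarith
    · simp only [count, if_pos hi, if_neg hj]; linarith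
    · simp only [count, if_neg hi, if_pos hj]; linarith
    · simp [count, hi, hj, D', Function.update_of_ne]
  have hcount : ∑ i, ∑ j ∈ univ.erase i, count i j = 2 * ((n : ℝ) - 1) := by
    simp [count, Finset.sum_add_distrib, Finset.sum_ite_eq', Finset.card_erase_of_mem,
      Nat.cast_sub (by omega : 1 ≤ n), Finset.sum_ite, Finset.filter_ne]
    ring
  have hcoef : 0 ≤ 1 / ((n : ℝ) * ((n : ℝ) - 1)) := one_div_nonneg.2 (by nlinarith)
  calc |uStatistic h D' - uStatistic h D|
      = 1 / ((n : ℝ) * ((n : ℝ) - 1)) *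
          |∑ i, ∑ j ∈ univ.erase i, (h (D' i) (D' j) - h (D i) (D j))| := by
        simp only [uStatistic, ← mul_sub, abs_mul, abs_of_nonneg hcoef, ← Finset.sum_sub_distrib]
    _ ≤ 1 / ((n : ℝ) * ((n : ℝ) - 1)) * ∑ i, ∑ j ∈ univ.erase i, (b - a) * count i j := by
        gcongr
        exact (abs_sum_le_sum_abs _ _).trans (sum_le_sum fun i _ =>
          (abs_sum_le_sum_abs _ _).trans (sum_le_sum fun j _ => hterm i j))
    _ = 2 * (b - a) / n := by
        have : (n : ℝ) - 1 ≠ 0 := by linarith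
        simp only [← Finset.mul_sum, hcount]
        field_simp

variable [MeasurableSpace α]

lemma measurable_uStatistic (hh : Measurable (Function.uncurry h)) :
    Measurable fun D : Fin n → α => uStatistic h D :=
  (Finset.measurable_sum _ fun i _ => Finset.measurable_sum _ fun j _ =>
    hh.comp ((measurable_pi_apply i).prodMk (measurable_pi_apply j))).const_mul _

variable {P : Measure α} [IsProbabilityMeasure P]

lemma map_pi_eval_prod_eval {i j : Fin n} (hij : i ≠ j) :
    (Measure.pi fun _ => P).map (fun D => (D i, D j)) = P.prod P := by
  have hindep := (iIndepFun_pi (μ := fun _ : Fin n => P) (X := fun _ => id)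
    fun _ => aemeasurable_id).indepFun hij
  simp only [id] at hindep
  rw [indepFun_iff_map_prod_eq_prod_map_map (measurable_pi_apply i).aemeasurable
    (measurable_pi_apply j).aemeasurable] at hindep
  simpa [(measurePreserving_eval _ i).map_eq, (measurePreserving_eval _ j).map_eq] using hindep

lemma integral_uStatistic (hn : 2 ≤ n) (hh_meas : Measurable (Function.uncurry h)) {a b : ℝ}
    (hh : ∀ z z', h z z' ∈ Set.Icc a b) :
    ∫ D, uStatistic h D ∂(Measure.pi fun _ : Fin n => P) = ∫ z, ∫ z', h z z' ∂P ∂P := by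
  have hpm : ∀ i j : Fin n, Measurable fun D : Fin n → α => (D i, D j) := fun i j =>
    (measurable_pi_apply i).prodMk (measurable_pi_apply j)
  have hpair_meas : ∀ i j : Fin n, Measurable fun D : Fin n → α => h (D i) (D j) := fun i j =>
    hh_meas.comp (hpm i j)
  have hint : ∀ i j : Fin n, Integrable (fun D => h (D i) (D j)) (Measure.pi fun _ => P) :=
    fun i j => .of_mem_Icc a b (hpair_meas i j).aemeasurable (ae_of_all _ fun D => hh _ _)
  have hpair : ∀ i : Fin n, ∀ j ∈ univ.erase i,
      ∫ D, h (D i) (D j) ∂(Measure.pi fun _ => P) = ∫ z, ∫ z', h z z' ∂P ∂P := fun i j hj => by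
    calc ∫ D, h (D i) (D j) ∂(Measure.pi fun _ => P)
        = ∫ q, Function.uncurry h q ∂(Measure.pi fun _ => P).map (fun D => (D i, D j)) :=
          (integral_map (hpm i j).aemeasurable hh_meas.aestronglyMeasurable).symm
      _ = ∫ z, ∫ z', h z z' ∂P ∂P := by
          rw [map_pi_eval_prod_eval (Finset.ne_of_mem_erase hj).symm,
            integral_prod _ (.of_mem_Icc a b hh_meas.aemeasurable (ae_of_all _ fun q => hh _ _))]
          rfl
  have : Nonempty α := nonempty_of_isProbabilityMeasure P
  rw [← uStatistic_const hn (∫ z, ∫ z', h z z' ∂P ∂P) fun _ => Classical.arbitrary α]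
  simp only [uStatistic, integral_const_mul]
  rw [integral_finsetSum _ fun i _ => integrable_finsetSum _ fun j _ => hint i j]
  congr 1
  exact sum_congr rfl fun i _ => (integral_finsetSum _ fun j _ => hint i j).trans
    (sum_congr rfl (hpair i))

theorem ofReal_one_sub_le_measure_uStatistic_sub_le (hn : 2 ≤ n)
    (hh_meas : Measurable (Function.uncurry h)) {a b : ℝ} (hh : ∀ z z', h z z' ∈ Set.Icc a b)
    {δ : ℝ} (hδ : 0 < δ) :
    ENNReal.ofReal (1 - δ) ≤ (Measure.pi fun _ : Fin n => P)
      {D | uStatistic h D - ∫ z, ∫ z', h z z' ∂P ∂P ≤ 2 * (b - a) * √(log (1 / δ) / (2 * n))} := by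
  have : Nonempty α := nonempty_of_isProbabilityMeasure P
  have hab := (hh (Classical.arbitrary α) (Classical.arbitrary α)).1.trans
    (hh (Classical.arbitrary α) (Classical.arbitrary α)).2
  have hn' : (0 : ℝ) < n := by positivity
  let c : ℝ≥0 := ⟨2 * (b - a) / n, by have := sub_nonneg.2 hab; positivity⟩
  have hsub := hasSubgaussianMGF_pi_of_boundedDifferences (P := P) (c := c)
    (measurable_uStatistic hh_meas) (uStatistic_mem_Icc hn hh)
    (fun D k x => abs_uStatistic_update_sub_le hn hh D k x)
  rw [integral_uStatistic hn hh_meas hh] at hsub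
  convert hsub.ofReal_one_sub_le_measure_le hδ using 5
  rw [show 2 * (b - a) * √(log (1 / δ) / (2 * n)) = √((2 * (b - a)) ^ 2 * (log (1 / δ) / (2 * n)))
    by rw [sqrt_mul (sq_nonneg _), sqrt_sq (by linarith)]]
  have hc : (c : ℝ) = 2 * (b - a) / n := rfl
  congr 1
  push_cast [hc]
  field_simp

lemma exists_measurable_retraction {S : Set α} (hS : MeasurableSet S) (hne : S.Nonempty) :
    ∃ r : α → α, Measurable r ∧ (∀ z, r z ∈ S) ∧ ∀ z ∈ S, r z = z := by
  classical
  obtain ⟨z₀, hz₀⟩ := hne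
  refine ⟨fun z => if z ∈ S then z else z₀, Measurable.ite hS measurable_id measurable_const,
    fun z => ?_, fun z hz => if_pos hz⟩
  by_cases hz : z ∈ S <;> simp [hz, hz₀]

/-- Points outside `S` are moved into `S` by a retraction, which changes the U-statistic and the
double integral only on null sets. -/
theorem ofReal_one_sub_le_measure_uStatistic_sub_le_of_measure_eq_one (hn : 2 ≤ n)
    (hh_meas : Measurable (Function.uncurry h)) {S : Set α} (hS : MeasurableSet S) (hS1 : P S = 1)
    {a b : ℝ} (hh : ∀ z ∈ S, ∀ z' ∈ S, h z z' ∈ Set.Icc a b) {δ : ℝ} (hδ : 0 < δ) :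
    ENNReal.ofReal (1 - δ) ≤ (Measure.pi fun _ : Fin n => P)
      {D | uStatistic h D - ∫ z, ∫ z', h z z' ∂P ∂P ≤ 2 * (b - a) * √(log (1 / δ) / (2 * n))} := by
  obtain ⟨r, hr_meas, hr_mem, hr_id⟩ :=
    exists_measurable_retraction hS (nonempty_of_measure_ne_zero (μ := P) (by simp [hS1]))
  have hS_ae : ∀ᵐ z ∂P, z ∈ S := (mem_ae_iff_prob_eq_one hS).2 hS1
  have hr_ae : ∀ᵐ z ∂P, r z = z := hS_ae.mono hr_id
  let h' : α → α → ℝ := fun z z' => h (r z) (r z')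
  have hint : ∫ z, ∫ z', h' z z' ∂P ∂P = ∫ z, ∫ z', h z z' ∂P ∂P :=
    integral_congr_ae (hr_ae.mono fun z hz => integral_congr_ae (hr_ae.mono fun z' hz' => by
      simp [h', hz, hz']))
  have hU : ∀ᵐ D ∂(Measure.pi fun _ : Fin n => P), uStatistic h' D = uStatistic h D := by
    have : ∀ᵐ D ∂(Measure.pi fun _ : Fin n => P), ∀ i, r (D i) = D i :=
      ae_all_iff.2 fun i => (measurePreserving_eval (fun _ => P) i).quasiMeasurePreserving.ae
        (p := fun z => r z = z) hr_ae
    filter_upwards [this] with D hD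
    simp only [h', uStatistic, hD]
  refine (ofReal_one_sub_le_measure_uStatistic_sub_le hn (h := h')
    (hh_meas.comp (hr_meas.prodMap hr_meas)) (fun z z' => hh _ (hr_mem z) _ (hr_mem z')) hδ).trans
    (measure_mono_ae ?_)
  filter_upwards [hU] with D hD (hle : uStatistic h' D - _ ≤ _)
  rwa [hD, hint] at hle

end UStatistic

lemma abs_qForm_le {d : ℕ} (A : Matrix (Fin d) (Fin d) ℝ) (x x' : Fin d → ℝ) :
    |qForm A x x'| ≤ frobNorm A * (norm2 x * norm2 x') := by
  have hq : qForm A x x' = ∑ p : Fin d × Fin d, A p.1 p.2 * (x p.1 * x' p.2) := by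
    rw [qForm, ← univ_product_univ, sum_product]
    exact sum_congr rfl fun i _ => sum_congr rfl fun j _ => by ring
  have hA : frobNorm A = √(∑ p : Fin d × Fin d, A p.1 p.2 ^ 2) := by
    rw [frobNorm, ← univ_product_univ, sum_product]
  have hx : norm2 x * norm2 x' = √(∑ p : Fin d × Fin d, (x p.1 * x' p.2) ^ 2) := by
    rw [norm2, norm2, ← sqrt_mul (sum_nonneg fun _ _ => sq_nonneg _), sum_mul_sum,
      ← univ_product_univ, sum_product]
    simp only [mul_pow]
  rw [hq, hA, hx, abs_le]
  constructor
  · have := sum_mul_le_sqrt_mul_sqrt univ (fun p : Fin d × Fin d => -A p.1 p.2)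
      (fun p => x p.1 * x' p.2)
    simp only [neg_mul, sum_neg_distrib, neg_sq] at this
    linarith
  · exact sum_mul_le_sqrt_mul_sqrt _ _ _

lemma lossFn_mem_Icc {d L : ℕ} {g : ℝ → ℝ} (hg : ∀ t, 0 ≤ g t ∧ g t ≤ 1) (lam : ℝ)
    (A : Matrix (Fin d) (Fin d) ℝ) {R Lbar : ℝ} {z z' : Pt d L} (hx : norm2 z.1 ≤ R)
    (hx' : norm2 z'.1 ≤ R) (hy : 0 ≤ ipY z.2 z'.2 ∧ ipY z.2 z'.2 ≤ Lbar) :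
    lossFn g lam A z z' ∈
      Set.Icc (lam * A.trace) (lam * A.trace + (Lbar + frobNorm A * R ^ 2) ^ 2) := by
  have hq : |qForm A z.1 z'.1| ≤ frobNorm A * R ^ 2 := by
    refine (abs_qForm_le A z.1 z'.1).trans (mul_le_mul_of_nonneg_left ?_ (sqrt_nonneg _))
    rw [sq]
    exact mul_le_mul hx hx' (sqrt_nonneg _) ((sqrt_nonneg _).trans hx)
  have hsq : (ipY z.2 z'.2 - qForm A z.1 z'.1) ^ 2 ≤ (Lbar + frobNorm A * R ^ 2) ^ 2 := by
    obtain ⟨hq₁, hq₂⟩ := abs_le.1 hq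
    exact sq_le_sq' (by linarith) (by linarith)
  obtain ⟨hg₀, hg₁⟩ := hg (ipY z.2 z'.2)
  have hsq₀ := sq_nonneg (ipY z.2 z'.2 - qForm A z.1 z'.1)
  rw [lossFn, Set.mem_Icc]
  constructor
  · linarith [mul_nonneg hg₀ hsq₀]
  · linarith [mul_le_of_le_one_left hsq₀ hg₁]

lemma measurable_lossFn {d L : ℕ} {g : ℝ → ℝ} (hg : Measurable g) (lam : ℝ)
    (A : Matrix (Fin d) (Fin d) ℝ) : Measurable (Function.uncurry (lossFn (L := L) g lam A)) := by
  unfold lossFn ipY qForm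
  fun_prop

theorem stmt12_general {d L : ℕ} {lam R Lbar : ℝ}
    (g : ℝ → ℝ) (hgm : Measurable g) (hg : ∀ t, 0 ≤ g t ∧ g t ≤ 1)
    (P : Measure (Pt d L)) [IsProbabilityMeasure P]
    (S : Set (Pt d L)) (hSm : MeasurableSet S) (hS1 : P S = 1)
    (hSx : ∀ z ∈ S, norm2 z.1 ≤ R)
    (hSy : ∀ z ∈ S, ∀ z' ∈ S, 0 ≤ ipY z.2 z'.2 ∧ ipY z.2 z'.2 ≤ Lbar)
    (Astar : Matrix (Fin d) (Fin d) ℝ)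
    {n : ℕ} (hn : 2 ≤ n) {δ : ℝ} (hδ0 : 0 < δ) :
    ENNReal.ofReal (1 - δ) ≤
      (Measure.pi fun _ : Fin n => P) {D : Fin n → Pt d L |
        empRisk g lam Astar D - popRisk g lam P Astar ≤
          4 * (Lbar ^ 2 + frobNorm Astar ^ 2 * R ^ 4) *
            Real.sqrt (Real.log (1 / δ) / (2 * n))} := by
  have hloss : ∀ z ∈ S, ∀ z' ∈ S, lossFn g lam Astar z z' ∈ Set.Icc (lam * Astar.trace)
      (lam * Astar.trace + (Lbar + frobNorm Astar * R ^ 2) ^ 2) := fun z hz z' hz' =>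
    lossFn_mem_Icc hg lam Astar (hSx z hz) (hSx z' hz') (hSy z hz z' hz')
  refine (ofReal_one_sub_le_measure_uStatistic_sub_le_of_measure_eq_one hn
    (measurable_lossFn hgm lam Astar) hSm hS1 hloss hδ0).trans (measure_mono fun D hD => ?_)
  change empRisk g lam Astar D - popRisk g lam P Astar ≤ _ at hD
  refine hD.trans (mul_le_mul_of_nonneg_right ?_ (sqrt_nonneg _))
  nlinarith [sq_nonneg (Lbar - frobNorm Astar * R ^ 2)]

theorem stmt12 {d L : ℕ} {lam R Lbar : ℝ} (hlam : 0 < lam) (hR : 0 < R) (hLbar : 0 ≤ Lbar)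
    (g : ℝ → ℝ) (hgm : Measurable g) (hg : ∀ t, 0 ≤ g t ∧ g t ≤ 1)
    (P : Measure (Pt d L)) [IsProbabilityMeasure P]
    (S : Set (Pt d L)) (hSm : MeasurableSet S) (hS1 : P S = 1)
    (hSx : ∀ z ∈ S, norm2 z.1 ≤ R)
    (hSy : ∀ z ∈ S, ∀ z' ∈ S, 0 ≤ ipY z.2 z'.2 ∧ ipY z.2 z'.2 ≤ Lbar)
    (Astar : Matrix (Fin d) (Fin d) ℝ) (hAstar : Astar.PosSemidef)
    {n : ℕ} (hn : 2 ≤ n) {δ : ℝ} (hδ0 : 0 < δ) (hδ1 : δ < 1) :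
    ENNReal.ofReal (1 - δ) ≤
      (Measure.pi fun _ : Fin n => P) {D : Fin n → Pt d L |
        empRisk g lam Astar D - popRisk g lam P Astar ≤
          4 * (Lbar ^ 2 + frobNorm Astar ^ 2 * R ^ 4) *
            Real.sqrt (Real.log (1 / δ) / (2 * n))} :=
  stmt12_general g hgm hg P S hSm hS1 hSx hSy Astar hn hδ0

end
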